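/- arXiv:chao-dyn/9506014 — 3 statements merged into one kernel-verified Lean document; each statement's English description precedes it below -/
import Mathlib

section
/- Let (ζ_n)_{n≥0} be a sequence of complex numbers with |ζ_n| < exp(a + bn) for some a ∈ ℝ, b > 0. Then the set of entire functions s with s(n) = ζ_n for all integers n ≥ 0 is infinite; indeed, it is a coset s₀ + S₀ where S₀ is the set of entire functions vanishing at all non-negative integers, and S₀ is infinite. -/
/-!
An explicit interpolant is the damped cardinal series
`s₀ z = ∑ ζₙ e^{(b+1)(z-n)} sin(π(z-n)) / (π(z-n))`: the `n`-th term equals `ζₙ` at `n` and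
vanishes at every other integer, and on `‖z‖ < R` it is bounded by `C_R e^{-n}` because the
sinc factor is bounded on horizontal strips, so the series converges locally uniformly.
Two entire interpolants differ by an entire function vanishing on `ℕ`, and the functions
`c sin(πz)` already form an infinite family of those.
-/
open Complex Set Filter Metric Topology
open scoped Real

namespace Complex

lemma norm_sin_le_exp_abs_im (z : ℂ) : ‖sin z‖ ≤ Real.exp |z.im| := by
  have hexp (w : ℂ) (hw : w.re ≤ |z.im|) : ‖exp w‖ ≤ Real.exp |z.im| := by
    rw [norm_exp]; exact Real.exp_le_exp.2 hw
  calc ‖sin z‖ = ‖exp (-z * I) - exp (z * I)‖ / 2 := by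
        simp [sin]
    _ ≤ (‖exp (-z * I)‖ + ‖exp (z * I)‖) / 2 := by gcongr; exact norm_sub_le _ _
    _ ≤ (Real.exp |z.im| + Real.exp |z.im|) / 2 := by
        gcongr <;> apply hexp <;> simp [le_abs_self, neg_le_abs]
    _ = Real.exp |z.im| := by ring

@[fun_prop]
lemma differentiable_dslope_sin : Differentiable ℂ (dslope sin 0) := fun _ =>
  ((differentiableOn_dslope univ_mem).2 differentiable_sin.differentiableOn).differentiableAt
    univ_mem

lemma dslope_sin_int_mul_pi {k : ℤ} (hk : k ≠ 0) : dslope sin 0 (k * π) = 0 := by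
  have hkπ : (k * π : ℂ) ≠ 0 :=
    mul_ne_zero (Int.cast_ne_zero.2 hk) (ofReal_ne_zero.2 Real.pi_ne_zero)
  simp [dslope_of_ne _ hkπ, slope_def_module, sin_int_mul_pi]

lemma exists_bound_dslope_sin (R : ℝ) :
    ∃ C, ∀ w : ℂ, |w.im| ≤ R → ‖dslope sin 0 w‖ ≤ C := by
  obtain ⟨C, hC⟩ := (isCompact_closedBall (0 : ℂ) 1).exists_bound_of_continuousOn
    differentiable_dslope_sin.continuous.continuousOn
  refine ⟨max C (Real.exp R), fun w hw => ?_⟩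
  rcases le_or_gt ‖w‖ 1 with hw1 | hw1
  · exact (hC w (mem_closedBall_zero_iff.2 hw1)).trans (le_max_left _ _)
  · have hw0 : w ≠ 0 := norm_pos_iff.1 (one_pos.trans hw1)
    calc ‖dslope sin 0 w‖ = ‖sin w‖ / ‖w‖ := by
          simp [dslope_of_ne _ hw0, slope_def_module, div_eq_inv_mul]
      _ ≤ ‖sin w‖ := div_le_self (norm_nonneg _) hw1.le
      _ ≤ Real.exp R := (norm_sin_le_exp_abs_im w).trans (Real.exp_le_exp.2 hw)
      _ ≤ max C (Real.exp R) := le_max_right _ _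

end Complex

lemma differentiable_tsum_of_forall_ball_bound {ι E : Type*} [NormedAddCommGroup E]
    [NormedSpace ℂ E] [CompleteSpace E] {f : ι → ℂ → E} (hf : ∀ i, Differentiable ℂ (f i))
    (hbound : ∀ R, ∃ u : ι → ℝ, Summable u ∧ ∀ i z, ‖z‖ < R → ‖f i z‖ ≤ u i) :
    Differentiable ℂ (fun z => ∑' i, f i z) := fun z => by
  obtain ⟨u, hu, hfu⟩ := hbound (‖z‖ + 1)
  have hball : ball (0 : ℂ) (‖z‖ + 1) ∈ 𝓝 z := isOpen_ball.mem_nhds (by simp)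
  exact (differentiableOn_tsum_of_summable_norm hu (fun i => (hf i).differentiableOn)
    isOpen_ball fun i w hw => hfu i w (mem_ball_zero_iff.1 hw)).differentiableAt hball

/-- `dslope sin 0 w` is `sin w / w`, extended by `1` at `0`. -/
noncomputable def sincInterpolant (ζ : ℕ → ℂ) (c : ℝ) (z : ℂ) : ℂ :=
  ∑' n : ℕ, ζ n * exp (c * (z - n)) * dslope sin 0 ((z - n) * π)

lemma sincInterpolant_natCast (ζ : ℕ → ℂ) (c : ℝ) (m : ℕ) : sincInterpolant ζ c m = ζ m := by
  rw [sincInterpolant, tsum_eq_single m]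
  · simp
  · intro n hn
    have hmn : ((m : ℂ) - n) = ((m - n : ℤ) : ℂ) := by push_cast; ring
    have hmn0 : (m - n : ℤ) ≠ 0 := sub_ne_zero.2 (Int.natCast_inj.not.2 (Ne.symm hn))
    rw [hmn, dslope_sin_int_mul_pi hmn0, mul_zero]

lemma norm_exp_mul_sub_natCast_le (c : ℝ) {R : ℝ} (n : ℕ) {z : ℂ} (hz : ‖z‖ < R) :
    ‖exp (c * (z - n))‖ ≤ Real.exp (|c| * R - c * n) := by
  rw [norm_exp, Real.exp_le_exp]
  have hre : (c * (z - n) : ℂ).re = c * z.re - c * n := by simp [mul_sub]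
  rw [hre]
  have hcz : c * z.re ≤ |c| * R := calc
    c * z.re ≤ |c * z.re| := le_abs_self _
    _ = |c| * |z.re| := abs_mul c z.re
    _ ≤ |c| * R := by gcongr; exact (abs_re_le_norm z).trans hz.le
  linarith

lemma differentiable_sincInterpolant {ζ : ℕ → ℂ} {a b c : ℝ}
    (hζ : ∀ n : ℕ, ‖ζ n‖ ≤ Real.exp (a + b * n)) (hbc : b < c) :
    Differentiable ℂ (sincInterpolant ζ c) := by
  refine differentiable_tsum_of_forall_ball_bound (fun n => ?_) fun R => ?_
  · fun_prop
  obtain ⟨C, hC⟩ := exists_bound_dslope_sin (π * R)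
  refine ⟨fun n : ℕ => C * Real.exp (a + |c| * R) * Real.exp (n * (b - c)),
    (Real.summable_exp_nat_mul_iff.2 (sub_neg.2 hbc)).mul_left _, fun n z hz => ?_⟩
  have hsinc : ‖dslope sin 0 ((z - n) * π)‖ ≤ C := hC _ <| by
    simpa [abs_mul, abs_of_pos Real.pi_pos, mul_comm] using
      mul_le_mul_of_nonneg_left ((abs_im_le_norm z).trans hz.le) Real.pi_pos.le
  calc ‖ζ n * exp (c * (z - n)) * dslope sin 0 ((z - n) * π)‖
      ≤ Real.exp (a + b * n) * Real.exp (|c| * R - c * n) * C := by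
        rw [norm_mul, norm_mul]
        gcongr
        · exact hζ n
        · exact norm_exp_mul_sub_natCast_le c n hz
    _ = C * Real.exp (a + |c| * R) * Real.exp (n * (b - c)) := by
        rw [← Real.exp_add, mul_comm, mul_assoc, ← Real.exp_add]; ring_nf

lemma setOf_differentiable_interpolating_eq_image {𝕜 E F ι : Type*} [NontriviallyNormedField 𝕜]
    [NormedAddCommGroup E] [NormedSpace 𝕜 E] [NormedAddCommGroup F] [NormedSpace 𝕜 F]
    {x : ι → E} {ζ : ι → F} {s₀ : E → F} (hs₀ : Differentiable 𝕜 s₀)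
    (hs₀x : ∀ i, s₀ (x i) = ζ i) :
    {s : E → F | Differentiable 𝕜 s ∧ ∀ i, s (x i) = ζ i} =
      (fun g => s₀ + g) '' {g : E → F | Differentiable 𝕜 g ∧ ∀ i, g (x i) = 0} := by
  ext s
  constructor
  · rintro ⟨hs, hsx⟩
    exact ⟨s - s₀, ⟨hs.sub hs₀, fun i => by simp [hsx, hs₀x]⟩, add_sub_cancel s₀ s⟩
  · rintro ⟨g, ⟨hg, hgx⟩, rfl⟩
    exact ⟨hs₀.add hg, fun i => by simp [hs₀x, hgx]⟩

lemma infinite_setOf_differentiable_vanishing_natCast :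
    {g : ℂ → ℂ | Differentiable ℂ g ∧ ∀ n : ℕ, g n = 0}.Infinite := by
  refine infinite_of_injective_forall_mem (f := fun c : ℂ => fun z => c * sin (z * π))
    (fun c₁ c₂ h => ?_) fun c => ⟨by fun_prop, fun n => by simp [sin_nat_mul_pi]⟩
  have hsin : sin (2⁻¹ * π) = 1 := by
    rw [inv_mul_eq_div, ← ofReal_ofNat, ← ofReal_div, ← ofReal_sin, Real.sin_pi_div_two,
      ofReal_one]
  simpa [hsin] using congrFun h 2⁻¹

theorem interpolants_coset_infinite_general (ζ : ℕ → ℂ) (a b : ℝ)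
    (hζ : ∀ n : ℕ, ‖ζ n‖ < Real.exp (a + b * n)) :
    {s : ℂ → ℂ | Differentiable ℂ s ∧ ∀ n : ℕ, s (n : ℂ) = ζ n}.Infinite ∧
    ∃ s₀ : ℂ → ℂ, Differentiable ℂ s₀ ∧ (∀ n : ℕ, s₀ (n : ℂ) = ζ n) ∧
      {g : ℂ → ℂ | Differentiable ℂ g ∧ ∀ n : ℕ, g (n : ℂ) = 0}.Infinite ∧
      {s : ℂ → ℂ | Differentiable ℂ s ∧ ∀ n : ℕ, s (n : ℂ) = ζ n} =
        (fun g : ℂ → ℂ => s₀ + g) ''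
          {g : ℂ → ℂ | Differentiable ℂ g ∧ ∀ n : ℕ, g (n : ℂ) = 0} := by
  have hs₀ : Differentiable ℂ (sincInterpolant ζ (b + 1)) :=
    differentiable_sincInterpolant (fun n => (hζ n).le) (lt_add_one b)
  have hcoset := setOf_differentiable_interpolating_eq_image (x := fun n : ℕ => (n : ℂ)) hs₀
    (sincInterpolant_natCast ζ (b + 1))
  refine ⟨?_, _, hs₀, sincInterpolant_natCast ζ (b + 1),
    infinite_setOf_differentiable_vanishing_natCast, hcoset⟩
  rw [hcoset]
  exact infinite_setOf_differentiable_vanishing_natCast.image (add_right_injective _).injOn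

theorem interpolants_coset_infinite (ζ : ℕ → ℂ) (a b : ℝ) (hb : 0 < b)
    (hζ : ∀ n : ℕ, ‖ζ n‖ < Real.exp (a + b * n)) :
    {s : ℂ → ℂ | Differentiable ℂ s ∧ ∀ n : ℕ, s (n : ℂ) = ζ n}.Infinite ∧
    ∃ s₀ : ℂ → ℂ, Differentiable ℂ s₀ ∧ (∀ n : ℕ, s₀ (n : ℂ) = ζ n) ∧
      {g : ℂ → ℂ | Differentiable ℂ g ∧ ∀ n : ℕ, g (n : ℂ) = 0}.Infinite ∧
      {s : ℂ → ℂ | Differentiable ℂ s ∧ ∀ n : ℕ, s (n : ℂ) = ζ n} =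
        (fun g : ℂ → ℂ => s₀ + g) ''
          {g : ℂ → ℂ | Differentiable ℂ g ∧ ∀ n : ℕ, g (n : ℂ) = 0} :=
  interpolants_coset_infinite_general ζ a b hζ
end

section
/- If a real sequence (E_n)_{n≥0} satisfies |E_n| ≤ exp(a + bn) for some a, b > 0, then there exists an entire function s : ℂ → ℂ that is real-valued on the non-negative integers with s(n) = E_n for all n ≥ 0. -/
/-! Take `s z = ∑ Eₙ · exp (-(z - n)²) · sinc (π (z - n))`. The sinc factor vanishes at every
integer other than `n` and is `1` at `n`, so `s` interpolates. On `‖z‖ ≤ R` the `n`-th kernel is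
at most `exp ((R + n)(R + n + π) - 2n²)`, and this Gaussian decay beats the exponential growth of
`Eₙ`; the series therefore converges locally uniformly and `s` is entire. -/

open scoped Real

namespace Complex

noncomputable def sinc : ℂ → ℂ := dslope sin 0

@[simp]
lemma sinc_zero : sinc 0 = 1 := by
  simp [sinc, dslope_same, deriv_sin]

lemma sinc_of_ne_zero {z : ℂ} (hz : z ≠ 0) : sinc z = sin z / z := by
  rw [sinc, dslope_of_ne _ hz, slope_def_field, sub_zero, sin_zero, sub_zero]

@[fun_prop]
lemma differentiable_sinc : Differentiable ℂ sinc := fun z =>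
  ((differentiableOn_dslope Filter.univ_mem).2 differentiable_sin.differentiableOn z
    (Set.mem_univ z)).differentiableAt Filter.univ_mem

lemma norm_sin_le_norm_mul_exp_norm (z : ℂ) : ‖sin z‖ ≤ ‖z‖ * Real.exp ‖z‖ := by
  have hexp (w : ℂ) (hw : ‖w‖ = ‖z‖) : ‖exp w - 1‖ ≤ ‖z‖ * Real.exp ‖z‖ := by
    simpa [hw] using norm_exp_sub_sum_le_norm_mul_exp w 1
  have hsin : sin z = ((exp (-z * I) - 1) - (exp (z * I) - 1)) * I / 2 := by
    rw [sin]; ring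
  calc ‖sin z‖ ≤ (‖exp (-z * I) - 1‖ + ‖exp (z * I) - 1‖) / 2 := by
        rw [hsin, norm_div, norm_mul, norm_I, mul_one, RCLike.norm_ofNat]
        gcongr
        exact norm_sub_le _ _
    _ ≤ (‖z‖ * Real.exp ‖z‖ + ‖z‖ * Real.exp ‖z‖) / 2 := by
        gcongr <;> exact hexp _ (by simp)
    _ = ‖z‖ * Real.exp ‖z‖ := by ring

lemma norm_sinc_le_exp_norm (z : ℂ) : ‖sinc z‖ ≤ Real.exp ‖z‖ := by
  rcases eq_or_ne z 0 with rfl | hz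
  · simp
  · rw [sinc_of_ne_zero hz, norm_div, div_le_iff₀ (norm_pos_iff.2 hz), mul_comm]
    exact norm_sin_le_norm_mul_exp_norm z

lemma sinc_int_mul_pi {k : ℤ} (hk : k ≠ 0) : sinc (k * π) = 0 := by
  rw [sinc_of_ne_zero (mul_ne_zero (by exact_mod_cast hk) (ofReal_ne_zero.2 Real.pi_ne_zero)),
    sin_int_mul_pi, zero_div]

end Complex

open Complex

lemma Real.summable_exp_quadratic (c₀ c₁ : ℝ) :
    Summable fun n : ℕ => Real.exp (c₀ + c₁ * n - n ^ 2) := by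
  refine (Real.summable_exp_neg_nat.mul_left (Real.exp (c₀ + (c₁ + 1) ^ 2 / 4))).of_nonneg_of_le
    (fun n => (Real.exp_pos _).le) fun n => ?_
  rw [← Real.exp_add, Real.exp_le_exp]
  nlinarith [sq_nonneg ((n : ℝ) - (c₁ + 1) / 2)]

lemma differentiable_tsum_of_forall_summable_norm_le {ι E : Type*} [NormedAddCommGroup E]
    [NormedSpace ℂ E] [CompleteSpace E] {F : ι → ℂ → E} (hF : ∀ i, Differentiable ℂ (F i))
    (hbound : ∀ R : ℝ, ∃ u : ι → ℝ, Summable u ∧ ∀ i w, ‖w‖ ≤ R → ‖F i w‖ ≤ u i) :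
    Differentiable ℂ fun z => ∑' i, F i z := by
  intro z
  obtain ⟨u, hu, hFu⟩ := hbound (‖z‖ + 1)
  have hball : DifferentiableOn ℂ (fun w => ∑' i, F i w) (Metric.ball 0 (‖z‖ + 1)) :=
    differentiableOn_tsum_of_summable_norm hu (fun i => (hF i).differentiableOn)
      Metric.isOpen_ball fun i w hw => hFu i w (mem_ball_zero_iff.1 hw).le
  exact hball.differentiableAt (Metric.isOpen_ball.mem_nhds (by simp))

noncomputable def interpolationKernel (x z : ℂ) : ℂ :=
  cexp (-(z - x) ^ 2) * sinc (π * (z - x))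

lemma differentiable_interpolationKernel (x : ℂ) : Differentiable ℂ (interpolationKernel x) := by
  unfold interpolationKernel
  fun_prop

@[simp]
lemma interpolationKernel_self (x : ℂ) : interpolationKernel x x = 1 := by
  simp [interpolationKernel]

lemma interpolationKernel_intCast_of_ne {m n : ℤ} (h : m ≠ n) :
    interpolationKernel n m = 0 := by
  have hsinc : sinc (π * (m - n)) = 0 := by
    simpa [mul_comm] using sinc_int_mul_pi (sub_ne_zero.2 h)
  rw [interpolationKernel, hsinc, mul_zero]

lemma norm_interpolationKernel_le {R x : ℝ} {w : ℂ} (hw : ‖w‖ ≤ R) :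
    ‖interpolationKernel x w‖ ≤ Real.exp ((R + |x|) * (R + |x| + π) - 2 * x ^ 2) := by
  have hre : |w.re| ≤ R := (abs_re_le_norm w).trans hw
  have him : |w.im| ≤ R := (abs_im_le_norm w).trans hw
  have hgauss : ‖cexp (-(w - x) ^ 2)‖ ≤ Real.exp ((R + |x|) ^ 2 - 2 * x ^ 2) := by
    rw [norm_exp, Real.exp_le_exp]
    have : (-(w - x) ^ 2).re = w.im ^ 2 - (w.re - x) ^ 2 := by simp [sq]
    have him_sq : w.im ^ 2 ≤ R ^ 2 := sq_le_sq' (abs_le.1 him).1 (abs_le.1 him).2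
    have hre_mul : w.re * x ≤ R * |x| :=
      (le_abs_self _).trans (abs_mul w.re x ▸ mul_le_mul_of_nonneg_right hre (abs_nonneg x))
    rw [this]
    nlinarith [sq_nonneg w.re, sq_abs x]
  have hsinc : ‖sinc (π * (w - x))‖ ≤ Real.exp (π * (R + |x|)) := by
    refine (norm_sinc_le_exp_norm _).trans (Real.exp_le_exp.2 ?_)
    rw [norm_mul, norm_real, Real.norm_of_nonneg Real.pi_pos.le]
    gcongr
    exact (norm_sub_le _ _).trans (by simpa using hw)
  calc ‖interpolationKernel x w‖
      ≤ Real.exp ((R + |x|) ^ 2 - 2 * x ^ 2) * Real.exp (π * (R + |x|)) := by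
        rw [interpolationKernel, norm_mul]
        exact mul_le_mul hgauss hsinc (norm_nonneg _) (Real.exp_pos _).le
    _ = Real.exp ((R + |x|) * (R + |x| + π) - 2 * x ^ 2) := by
        rw [← Real.exp_add]; ring_nf

lemma tsum_mul_interpolationKernel_natCast (E : ℕ → ℂ) (m : ℕ) :
    ∑' n : ℕ, E n * interpolationKernel n m = E m := by
  rw [tsum_eq_single m fun n hn => ?_, interpolationKernel_self, mul_one]
  have h := interpolationKernel_intCast_of_ne (m := m) (n := n) (by exact_mod_cast Ne.symm hn)
  rw [Int.cast_natCast, Int.cast_natCast] at h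
  rw [h, mul_zero]

lemma differentiable_tsum_mul_interpolationKernel {E : ℕ → ℂ} {a b : ℝ}
    (hE : ∀ n : ℕ, ‖E n‖ ≤ Real.exp (a + b * n)) :
    Differentiable ℂ fun z => ∑' n : ℕ, E n * interpolationKernel n z := by
  refine differentiable_tsum_of_forall_summable_norm_le
    (fun n => (differentiable_interpolationKernel n).const_mul (E n)) fun R => ?_
  refine ⟨_, Real.summable_exp_quadratic (a + R * (R + π)) (b + 2 * R + π), fun n w hw => ?_⟩
  have hK := norm_interpolationKernel_le (x := n) hw
  rw [Nat.abs_cast, ofReal_natCast] at hK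
  calc ‖E n * interpolationKernel n w‖
      ≤ Real.exp (a + b * n) * Real.exp ((R + n) * (R + n + π) - 2 * (n : ℝ) ^ 2) := by
        rw [norm_mul]; exact mul_le_mul (hE n) hK (norm_nonneg _) (Real.exp_pos _).le
    _ = _ := by rw [← Real.exp_add]; ring_nf

theorem exists_entire_interpolant_real_general (E : ℕ → ℝ) (a b : ℝ)
    (hE : ∀ n : ℕ, |E n| ≤ Real.exp (a + b * n)) :
    ∃ s : ℂ → ℂ, Differentiable ℂ s ∧ ∀ n : ℕ, s (n : ℂ) = (E n : ℂ) :=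
  ⟨_, differentiable_tsum_mul_interpolationKernel (E := fun n => (E n : ℂ)) (by simpa using hE),
    tsum_mul_interpolationKernel_natCast _⟩

theorem exists_entire_interpolant_real (E : ℕ → ℝ) (a b : ℝ) (ha : 0 < a) (hb : 0 < b)
    (hE : ∀ n : ℕ, |E n| ≤ Real.exp (a + b * n)) :
    ∃ s : ℂ → ℂ, Differentiable ℂ s ∧ ∀ n : ℕ, s (n : ℂ) = (E n : ℂ) :=
  exists_entire_interpolant_real_general E a b hE
end

section
/- Let k ≥ 1 and let b₁,…,b_k > 0, ε₁,…,ε_k > 0, a ∈ ℝ. Suppose |ζ_{n₁,…,n_k}| < exp(a + ∑ b_i n_i). Then the multi-series ∑_{n₁,…,n_k} ζ_{n₁…n_k} ∏_{i=1}^k f_{n_i}(z_i) converges uniformly on every polydisk {|z_i| < ρ, 1 ≤ i ≤ k}, with each term bounded in modulus by exp(a + ρ∑_i(4π+b_i+ε_i)) · exp(−∑_i ε_i n_i). -/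
/-!
Each kernel satisfies `|f_n(z)| ≤ exp(|z| (4π + b + ε) - (b + ε) n)`, because `|sin u / u| ≤ e^{|u|}`
and `Re z ≤ |z|`. Multiplying the `k` kernel bounds with the growth bound on `ζ`, the terms `b_i n_i`
cancel, and what remains is the majorant `C · exp(-∑ ε_i n_i)`, a product of `k` convergent
geometric series. The Weierstrass M-test gives uniform convergence.
-/

/-- The interpolation kernel `f_n` with the removable singularity at `z = n` filled in by 1. -/
noncomputable def fTerm (b ε : ℝ) (n : ℕ) (z : ℂ) : ℂ :=
  if z = (n : ℂ) then 1 else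
    Complex.exp ((z - n) * (2 * Real.pi + b + ε)) *
      Complex.sin (2 * Real.pi * (z - n)) / (2 * Real.pi * (z - n))

open Real Finset

lemma Complex.norm_sin_le_sinh_norm (w : ℂ) : ‖sin w‖ ≤ Real.sinh ‖w‖ :=
  (Complex.hasSum_sin w).norm_le_of_bounded (Real.hasSum_sinh ‖w‖) fun n => by
    simp [norm_pow]

lemma Real.sinh_le_mul_exp (x : ℝ) : sinh x ≤ x * exp x := by
  have h := add_one_le_exp (-(2 * x))
  have h2 : exp (-x) = exp (-(2 * x)) * exp x := by rw [← exp_add]; ring_nf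
  rw [sinh_eq, h2]
  nlinarith [exp_pos x]

lemma Complex.norm_sin_div_le_exp_norm (u : ℂ) : ‖sin u / u‖ ≤ Real.exp ‖u‖ := by
  rcases eq_or_ne u 0 with rfl | hu
  · simp
  rw [norm_div, div_le_iff₀ (norm_pos_iff.mpr hu), mul_comm]
  exact (norm_sin_le_sinh_norm u).trans (Real.sinh_le_mul_exp ‖u‖)

lemma norm_fTerm_le {b ε : ℝ} (hbε : 0 ≤ 2 * π + b + ε) (n : ℕ) (z : ℂ) :
    ‖fTerm b ε n z‖ ≤ exp (‖z‖ * (4 * π + b + ε) - (b + ε) * n) := by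
  unfold fTerm
  split_ifs with hz
  · subst hz
    rw [norm_one, one_le_exp_iff, Complex.norm_natCast]
    nlinarith [pi_pos, (n.cast_nonneg : (0 : ℝ) ≤ n)]
  rw [mul_div_assoc]
  have hexp : ‖Complex.exp ((z - n) * (2 * π + b + ε))‖ = exp ((z.re - n) * (2 * π + b + ε)) := by
    rw [Complex.norm_exp]; simp
  have hsin : ‖Complex.sin (2 * π * (z - n)) / (2 * π * (z - n))‖ ≤ exp (2 * π * (‖z‖ + n)) := by
    refine (Complex.norm_sin_div_le_exp_norm _).trans (exp_le_exp.mpr ?_)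
    have hzn : ‖z - n‖ ≤ ‖z‖ + n := by simpa using norm_sub_le z n
    rw [norm_mul, norm_mul, Complex.norm_real, Complex.norm_two, norm_of_nonneg pi_pos.le]
    gcongr
  calc ‖Complex.exp ((z - n) * (2 * π + b + ε)) * (Complex.sin (2 * π * (z - n)) / (2 * π * (z - n)))‖
      ≤ exp ((z.re - n) * (2 * π + b + ε)) * exp (2 * π * (‖z‖ + n)) := by
        rw [norm_mul, hexp]; gcongr
    _ ≤ exp (‖z‖ * (4 * π + b + ε) - (b + ε) * n) := by
        rw [← exp_add, exp_le_exp]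
        nlinarith [mul_le_mul_of_nonneg_right (Complex.re_le_norm z) hbε]

lemma norm_mul_prod_fTerm_le {ι : Type*} [Fintype ι] {a ρ : ℝ} {b ε : ι → ℝ}
    (hbε : ∀ i, 0 ≤ 2 * π + b i + ε i) {c : ℂ} {n : ι → ℕ}
    (hc : ‖c‖ ≤ exp (a + ∑ i, b i * n i)) {z : ι → ℂ} (hz : ∀ i, ‖z i‖ ≤ ρ) :
    ‖c * ∏ i, fTerm (b i) (ε i) (n i) (z i)‖ ≤
      exp (a + ρ * ∑ i, (4 * π + b i + ε i)) * exp (-∑ i, ε i * n i) := by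
  have hfactor (i : ι) :
      ‖fTerm (b i) (ε i) (n i) (z i)‖ ≤ exp (ρ * (4 * π + b i + ε i) - (b i + ε i) * n i) := by
    refine (norm_fTerm_le (hbε i) _ _).trans (exp_le_exp.mpr ?_)
    gcongr
    · linarith [pi_pos, hbε i]
    · exact hz i
  have hsplit : ∑ i, (b i + ε i) * n i = ∑ i, b i * n i + ∑ i, ε i * n i := by
    rw [← sum_add_distrib]; simp only [add_mul]
  calc ‖c * ∏ i, fTerm (b i) (ε i) (n i) (z i)‖
      ≤ exp (a + ∑ i, b i * n i) * ∏ i, exp (ρ * (4 * π + b i + ε i) - (b i + ε i) * n i) := by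
        rw [norm_mul, norm_prod]
        gcongr with i
        exact hfactor i
    _ = exp (a + ρ * ∑ i, (4 * π + b i + ε i)) * exp (-∑ i, ε i * n i) := by
        rw [← exp_sum, ← exp_add, ← exp_add, sum_sub_distrib, ← mul_sum, hsplit]
        ring_nf

lemma summable_prod_of_nonneg_of_summable {ι κ : Type*} [Fintype ι] {g : ι → κ → ℝ}
    (hg : ∀ i j, 0 ≤ g i j) (hs : ∀ i, Summable (g i)) :
    Summable fun n : ι → κ => ∏ i, g i (n i) := by
  classical
  refine summable_of_sum_le (c := ∏ i, ∑' j, g i j) (fun n => prod_nonneg fun i _ => hg i _)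
    fun u => ?_
  have hu : u ⊆ Fintype.piFinset fun i => u.image (· i) := fun n hn =>
    Fintype.mem_piFinset.mpr fun i => mem_image_of_mem _ hn
  calc ∑ n ∈ u, ∏ i, g i (n i)
      ≤ ∑ n ∈ Fintype.piFinset (fun i => u.image (· i)), ∏ i, g i (n i) :=
        sum_le_sum_of_subset_of_nonneg hu fun n _ _ => prod_nonneg fun i _ => hg i _
    _ = ∏ i, ∑ j ∈ u.image (· i), g i j := (prod_univ_sum _ _).symm
    _ ≤ ∏ i, ∑' j, g i j :=
        prod_le_prod (fun i _ => sum_nonneg fun j _ => hg i j)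
          fun i _ => (hs i).sum_le_tsum _ fun j _ => hg i j

lemma summable_exp_neg_sum_mul {ι : Type*} [Fintype ι] {ε : ι → ℝ} (hε : ∀ i, 0 < ε i) :
    Summable fun n : ι → ℕ => exp (-∑ i, ε i * n i) := by
  simp_rw [← sum_neg_distrib, exp_sum]
  refine summable_prod_of_nonneg_of_summable (g := fun i (m : ℕ) => exp (-(ε i * m)))
    (fun i m => (exp_pos _).le) fun i => ?_
  simpa [mul_comm] using summable_exp_nat_mul_iff.mpr (neg_lt_zero.mpr (hε i))

theorem multi_series_uniform_general (k : ℕ) (a : ℝ) (b ε : Fin k → ℝ)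
    (hb : ∀ i, 0 < b i) (hε : ∀ i, 0 < ε i)
    (ζ : (Fin k → ℕ) → ℂ)
    (hζ : ∀ n : Fin k → ℕ, ‖ζ n‖ < Real.exp (a + ∑ i, b i * n i))
    (ρ : ℝ) :
    TendstoUniformlyOn
      (fun (N : Finset (Fin k → ℕ)) (z : Fin k → ℂ) =>
        ∑ n ∈ N, ζ n * ∏ i, fTerm (b i) (ε i) (n i) (z i))
      (fun z : Fin k → ℂ => ∑' n : Fin k → ℕ, ζ n * ∏ i, fTerm (b i) (ε i) (n i) (z i))
      Filter.atTop {z : Fin k → ℂ | ∀ i, ‖z i‖ < ρ} ∧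
    ∀ (n : Fin k → ℕ) (z : Fin k → ℂ), (∀ i, ‖z i‖ < ρ) →
      ‖ζ n * ∏ i, fTerm (b i) (ε i) (n i) (z i)‖ ≤
        Real.exp (a + ρ * ∑ i, (4 * Real.pi + b i + ε i)) *
          Real.exp (-(∑ i, ε i * n i)) := by
  have hbound (n : Fin k → ℕ) (z : Fin k → ℂ) (hz : ∀ i, ‖z i‖ < ρ) :
      ‖ζ n * ∏ i, fTerm (b i) (ε i) (n i) (z i)‖ ≤
        exp (a + ρ * ∑ i, (4 * π + b i + ε i)) * exp (-∑ i, ε i * n i) :=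
    norm_mul_prod_fTerm_le (fun i => by linarith [hb i, hε i, pi_pos]) (hζ n).le
      fun i => (hz i).le
  exact ⟨tendstoUniformlyOn_tsum ((summable_exp_neg_sum_mul hε).mul_left _) hbound, hbound⟩

theorem multi_series_uniform (k : ℕ) (hk : 1 ≤ k) (a : ℝ) (b ε : Fin k → ℝ)
    (hb : ∀ i, 0 < b i) (hε : ∀ i, 0 < ε i)
    (ζ : (Fin k → ℕ) → ℂ)
    (hζ : ∀ n : Fin k → ℕ, ‖ζ n‖ < Real.exp (a + ∑ i, b i * n i))
    (ρ : ℝ) (hρ : 0 < ρ) :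
    TendstoUniformlyOn
      (fun (N : Finset (Fin k → ℕ)) (z : Fin k → ℂ) =>
        ∑ n ∈ N, ζ n * ∏ i, fTerm (b i) (ε i) (n i) (z i))
      (fun z : Fin k → ℂ => ∑' n : Fin k → ℕ, ζ n * ∏ i, fTerm (b i) (ε i) (n i) (z i))
      Filter.atTop {z : Fin k → ℂ | ∀ i, ‖z i‖ < ρ} ∧
    ∀ (n : Fin k → ℕ) (z : Fin k → ℂ), (∀ i, ‖z i‖ < ρ) →
      ‖ζ n * ∏ i, fTerm (b i) (ε i) (n i) (z i)‖ ≤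
        Real.exp (a + ρ * ∑ i, (4 * Real.pi + b i + ε i)) *
          Real.exp (-(∑ i, ε i * n i)) :=
  multi_series_uniform_general k a b ε hb hε ζ hζ ρ
end
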